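/- Every simple binary matroid has a unique minimal tropical basis, namely the set of its closed circuits. -/

import Mathlib

open Set

namespace TropicalPaper

variable {α : Type*}

/-- A circuit of a matroid is a minimal dependent set. -/
def Circuit (M : Matroid α) (C : Set α) : Prop := Minimal M.Dep C

/-- A matroid is simple if every circuit has at least 3 elements
(equivalently: no loops and no parallel pairs). -/
def Simple (M : Matroid α) : Prop := ∀ C, Circuit M C → 3 ≤ C.ncard

/-- A set `𝒞'` of circuits of `M` is a tropical basis if for every non-closed
set `X` there is `C ∈ 𝒞'` with `|C \ X| = 1`. -/
def TropicalBasis (M : Matroid α) (𝒞' : Set (Set α)) : Prop :=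
  (∀ C ∈ 𝒞', Circuit M C) ∧
  ∀ X ⊆ M.E, M.closure X ≠ X → ∃ C ∈ 𝒞', (C \ X).ncard = 1

/-- A tropical basis is minimal if no circuit can be removed from it. -/
def MinimalTropicalBasis (M : Matroid α) (𝒞' : Set (Set α)) : Prop :=
  TropicalBasis M 𝒞' ∧ ∀ C ∈ 𝒞', ¬ TropicalBasis M (𝒞' \ {C})

/-- `A` is orthogonal to a family `𝒟` if `|A ∩ D| ≠ 1` for all `D ∈ 𝒟`. -/
def Orthogonal (A : Set α) (𝒟 : Set (Set α)) : Prop :=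
  ∀ D ∈ 𝒟, (A ∩ D).ncard ≠ 1

/-- The rank of a set: the maximal cardinality of an independent subset. -/
noncomputable def rk (M : Matroid α) (X : Set α) : ℕ :=
  sSup {n | ∃ I, I ⊆ X ∧ M.Indep I ∧ I.ncard = n}

/-- `D` is a double circuit if `rank D = |D| - 2 = rank (D \ {e})` for all `e ∈ D`. -/
def DoubleCircuit (M : Matroid α) (D : Set α) : Prop :=
  D ⊆ M.E ∧ D.Finite ∧
    ∀ e ∈ D, rk M D = D.ncard - 2 ∧ rk M (D \ {e}) = D.ncard - 2

/-- `P` is the canonical partition of the double circuit `D`: a partition of `D`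
into nonempty parts whose complements within `D` are exactly the circuits contained
in `D`. The degree of the double circuit is the number of parts of `P`. -/
def DCPartition (M : Matroid α) (D : Set α) (P : Set (Set α)) : Prop :=
  (∀ p ∈ P, p.Nonempty) ∧ (∀ p ∈ P, p ⊆ D) ∧ P.PairwiseDisjoint id ∧
    ⋃₀ P = D ∧ ∀ C, (Circuit M C ∧ C ⊆ D) ↔ ∃ p ∈ P, C = D \ p

/-- A matroid is binary iff the symmetric difference of any two distinct circuits
contains a circuit. -/
def Binary (M : Matroid α) : Prop :=
  ∀ C₁ C₂, Circuit M C₁ → Circuit M C₂ → C₁ ≠ C₂ →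
    ∃ C, C ⊆ (C₁ \ C₂) ∪ (C₂ \ C₁) ∧ Circuit M C

/-! ### Auxiliary lemmas -/

section Aux

variable {M : Matroid α} {C C' C₁ C₂ D X : Set α} {e f : α}

lemma Circuit.dep (h : Circuit M C) : M.Dep C := h.1

lemma Circuit.subset_ground (h : Circuit M C) : C ⊆ M.E := h.1.subset_ground

lemma Circuit.finite [M.Finite] (h : Circuit M C) : C.Finite :=
  M.set_finite C h.subset_ground

lemma Circuit.subset_of_dep_subset (h : Circuit M C) (hD : M.Dep D) (hDC : D ⊆ C) : C ⊆ D :=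
  h.2 hD hDC

lemma Circuit.eq_of_subset (h : Circuit M C) (h' : Circuit M C') (hsub : C' ⊆ C) : C' = C :=
  hsub.antisymm (h.2 h'.1 hsub)

lemma Circuit.indep_diff_singleton (h : Circuit M C) (he : e ∈ C) : M.Indep (C \ {e}) := by
  by_contra hni
  have hdep : M.Dep (C \ {e}) :=
    (Matroid.not_indep_iff (diff_subset.trans h.subset_ground)).1 hni
  exact (h.2 hdep diff_subset he).2 rfl

lemma Circuit.mem_closure_diff_singleton (h : Circuit M C) (he : e ∈ C) :
    e ∈ M.closure (C \ {e}) := by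
  have hI := h.indep_diff_singleton he
  rw [hI.mem_closure_iff_of_notMem (fun h' => h'.2 rfl)]
  rw [insert_diff_singleton, insert_eq_of_mem he]
  exact h.1

lemma Circuit.closure_diff_singleton (h : Circuit M C) (he : e ∈ C) :
    M.closure (C \ {e}) = M.closure C := by
  refine subset_antisymm (M.closure_subset_closure diff_subset) ?_
  refine M.closure_subset_closure_of_subset_closure (fun x hx => ?_)
  by_cases hxe : x = e
  · subst hxe; exact h.mem_closure_diff_singleton he
  · exact M.subset_closure _ (diff_subset.trans h.subset_ground) ⟨hx, hxe⟩

lemma Circuit.nonempty (h : Circuit M C) : C.Nonempty := by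
  rw [nonempty_iff_ne_empty]
  rintro rfl
  exact (Matroid.dep_iff.1 h.1).1 M.empty_indep

private lemma exists_circuit_subset_aux [M.Finite] :
    ∀ n (D : Set α), D.ncard ≤ n → M.Dep D → ∃ C, C ⊆ D ∧ Circuit M C := by
  intro n
  induction n with
  | zero =>
    intro D hn hD
    have hfin : D.Finite := M.set_finite D hD.subset_ground
    have : D = ∅ := (ncard_eq_zero hfin).1 (Nat.le_zero.1 hn)
    exact absurd (this ▸ M.empty_indep) (Matroid.dep_iff.1 hD).1
  | succ n ih =>
    intro D hn hD
    by_cases h : Minimal M.Dep D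
    · exact ⟨D, Subset.rfl, h⟩
    · rw [Minimal] at h
      push_neg at h
      obtain ⟨D', hD', hsub, hnsub⟩ := h hD
      have hss : D' ⊂ D := ssubset_of_subset_not_subset hsub hnsub
      have hlt : D'.ncard < D.ncard :=
        Set.ncard_lt_ncard hss (M.set_finite D hD.subset_ground)
      obtain ⟨C, hCD, hC⟩ := ih D' (by omega) hD'
      exact ⟨C, hCD.trans hsub, hC⟩

lemma exists_circuit_subset [M.Finite] (hD : M.Dep D) : ∃ C, C ⊆ D ∧ Circuit M C :=
  exists_circuit_subset_aux D.ncard D le_rfl hD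

lemma exists_circuit_of_mem_closure [M.Finite] (hX : X ⊆ M.E) (he : e ∈ M.closure X)
    (heX : e ∉ X) : ∃ C, Circuit M C ∧ e ∈ C ∧ C ⊆ insert e X := by
  obtain ⟨I, hI⟩ := M.exists_isBasis X hX
  have he' : e ∈ M.closure I := by rwa [hI.closure_eq_closure]
  have heI : e ∉ I := fun h => heX (hI.subset h)
  have hdep : M.Dep (insert e I) := hI.indep.insert_dep_iff.2 ⟨he', heI⟩
  obtain ⟨C, hCsub, hC⟩ := exists_circuit_subset hdep
  have heC : e ∈ C := by
    by_contra h
    have hsub : C ⊆ I := fun x hx => ((hCsub hx).resolve_left (fun hxe => h (hxe ▸ hx)))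
    exact (Matroid.dep_iff.1 hC.1).1 (hI.indep.subset hsub)
  exact ⟨C, hC, heC, hCsub.trans (insert_subset_insert hI.subset)⟩

/-- Weak circuit elimination. -/
lemma weak_elimination [M.Finite] (h₁ : Circuit M C₁) (h₂ : Circuit M C₂) (hne : C₁ ≠ C₂)
    (he₁ : e ∈ C₁) (he₂ : e ∈ C₂) :
    ∃ C, Circuit M C ∧ C ⊆ (C₁ ∪ C₂) \ {e} := by
  -- it suffices to find `f ∈ C₁ \ C₂` (up to swapping)
  have key : ∀ (C₁ C₂ : Set α), Circuit M C₁ → Circuit M C₂ → e ∈ C₁ → e ∈ C₂ →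
      ∀ f, f ∈ C₁ → f ∉ C₂ → M.Dep ((C₁ ∪ C₂) \ {e}) := by
    clear hne he₁ he₂ h₁ h₂
    intro C₁ C₂ h₁ h₂ he₁ he₂ f hf₁ hf₂
    set D := (C₁ ∪ C₂) \ {e} with hD
    have hDE : D ⊆ M.E := diff_subset.trans (union_subset h₁.subset_ground h₂.subset_ground)
    by_contra hnd
    have hind : M.Indep D := (Matroid.not_dep_iff hDE).1 hnd
    have hfe : f ≠ e := fun h => hf₂ (h ▸ he₂)
    have hfD : f ∈ D := ⟨Or.inl hf₁, hfe⟩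
    have hind' : M.Indep (D \ {f}) := hind.subset diff_subset
    have hkey : C₂ \ {e} ⊆ D \ {f} := fun x hx =>
      ⟨⟨Or.inr hx.1, hx.2⟩, fun hxf => hf₂ ((hxf : x = f) ▸ hx.1)⟩
    have he_cl : e ∈ M.closure (D \ {f}) :=
      M.closure_subset_closure hkey (h₂.mem_closure_diff_singleton he₂)
    have hA : C₁ \ {f} ⊆ M.closure (D \ {f}) := by
      intro x hx
      by_cases hxe : x = e
      · exact hxe ▸ he_cl
      · exact M.subset_closure _ (diff_subset.trans hDE)
          ⟨⟨Or.inl hx.1, hxe⟩, hx.2⟩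
    have hf_cl : f ∈ M.closure (D \ {f}) :=
      M.closure_subset_closure_of_subset_closure hA (h₁.mem_closure_diff_singleton hf₁)
    have : M.Dep (insert f (D \ {f})) :=
      hind'.insert_dep_iff.2 ⟨hf_cl, fun h => h.2 rfl⟩
    rw [insert_diff_singleton, insert_eq_of_mem hfD] at this
    exact hnd this
  by_cases hsub : C₁ ⊆ C₂
  · exact absurd (h₂.eq_of_subset h₁ hsub) hne
  · obtain ⟨f, hf₁, hf₂⟩ := not_subset.1 hsub
    obtain ⟨C, hCsub, hC⟩ := exists_circuit_subset (key C₁ C₂ h₁ h₂ he₁ he₂ f hf₁ hf₂)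
    exact ⟨C, hC, hCsub⟩

/-- Strong circuit elimination. -/
private lemma strong_elimination_aux [M.Finite] :
    ∀ n, ∀ C₁ C₂ : Set α, ∀ e f : α, (C₁ ∪ C₂).ncard ≤ n → Circuit M C₁ → Circuit M C₂ →
      e ∈ C₁ → e ∈ C₂ → f ∈ C₁ → f ∉ C₂ →
      ∃ C, Circuit M C ∧ f ∈ C ∧ C ⊆ (C₁ ∪ C₂) \ {e} := by
  intro n
  induction n with
  | zero =>
    intro C₁ C₂ e f hn h₁ h₂ he₁ he₂ hf₁ hf₂
    exfalso
    have hfin : (C₁ ∪ C₂).Finite := h₁.finite.union h₂.finite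
    have : (C₁ ∪ C₂) = ∅ := (ncard_eq_zero hfin).1 (Nat.le_zero.1 hn)
    have hmem : e ∈ C₁ ∪ C₂ := Or.inl he₁
    rw [this] at hmem
    exact hmem
  | succ n ih =>
    intro C₁ C₂ e f hn h₁ h₂ he₁ he₂ hf₁ hf₂
    have hne : C₁ ≠ C₂ := fun h => hf₂ (h ▸ hf₁)
    obtain ⟨C₃, h₃, h₃sub⟩ := weak_elimination h₁ h₂ hne he₁ he₂
    by_cases hfC₃ : f ∈ C₃
    · exact ⟨C₃, h₃, hfC₃, h₃sub⟩
    have he₃ : e ∉ C₃ := fun h => (h₃sub h).2 rfl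
    have hex : ∃ h, h ∈ C₃ ∧ h ∉ C₁ := by
      by_contra hcon
      push_neg at hcon
      exact hfC₃ ((h₁.eq_of_subset h₃ hcon) ▸ hf₁)
    obtain ⟨g, hg₃, hg₁⟩ := hex
    have hg₂ : g ∈ C₂ := ((h₃sub hg₃).1.resolve_left hg₁)
    have hfin : (C₁ ∪ C₂).Finite := h₁.finite.union h₂.finite
    -- first application: circuits C₂, C₃, common element g, target e
    have hsize₁ : (C₂ ∪ C₃).ncard ≤ n := by
      have hss : C₂ ∪ C₃ ⊂ C₁ ∪ C₂ := by
        refine ssubset_of_subset_not_subset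
          (union_subset subset_union_right (h₃sub.trans diff_subset)) (fun hcon => ?_)
        have : f ∈ C₂ ∪ C₃ := hcon (Or.inl hf₁)
        exact this.elim hf₂ hfC₃
      have := Set.ncard_lt_ncard hss hfin
      omega
    obtain ⟨C₄, h₄, he₄, h₄sub⟩ := ih C₂ C₃ g e hsize₁ h₂ h₃ hg₂ hg₃ he₂ he₃
    -- second application: circuits C₁, C₄, common element e, target f
    have hf₄ : f ∉ C₄ := fun h => ((h₄sub h).1.elim hf₂ hfC₃)
    have hg₄ : g ∉ C₄ := fun h => (h₄sub h).2 rfl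
    have h₄sub' : C₄ ⊆ C₁ ∪ C₂ := (h₄sub.trans diff_subset).trans
      (union_subset subset_union_right (h₃sub.trans diff_subset))
    have hsize₂ : (C₁ ∪ C₄).ncard ≤ n := by
      have hss : C₁ ∪ C₄ ⊂ C₁ ∪ C₂ := by
        refine ssubset_of_subset_not_subset (union_subset subset_union_left h₄sub')
          (fun hcon => ?_)
        have : g ∈ C₁ ∪ C₄ := hcon (Or.inr hg₂)
        exact this.elim hg₁ hg₄
      have := Set.ncard_lt_ncard hss hfin
      omega
    obtain ⟨C₅, h₅, hf₅, h₅sub⟩ := ih C₁ C₄ e f hsize₂ h₁ h₄ he₁ he₄ hf₁ hf₄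
    exact ⟨C₅, h₅, hf₅, h₅sub.trans
      (diff_subset_diff_left (union_subset subset_union_left h₄sub'))⟩

lemma strong_elimination [M.Finite] (h₁ : Circuit M C₁) (h₂ : Circuit M C₂)
    (he₁ : e ∈ C₁) (he₂ : e ∈ C₂) (hf₁ : f ∈ C₁) (hf₂ : f ∉ C₂) :
    ∃ C, Circuit M C ∧ f ∈ C ∧ C ⊆ (C₁ ∪ C₂) \ {e} :=
  strong_elimination_aux (C₁ ∪ C₂).ncard C₁ C₂ e f le_rfl h₁ h₂ he₁ he₂ hf₁ hf₂

/-- Every tropical basis contains every closed circuit. -/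
lemma closed_circuit_mem_tropicalBasis [M.Finite] {B : Set (Set α)}
    (hTB : TropicalBasis M B) (hC : Circuit M C) (hcl : M.closure C = C) : C ∈ B := by
  obtain ⟨e, he⟩ := hC.nonempty
  set X := C \ {e} with hX
  have hXE : X ⊆ M.E := diff_subset.trans hC.subset_ground
  have hecl : e ∈ M.closure X := hC.mem_closure_diff_singleton he
  have hne : M.closure X ≠ X := fun h => (h ▸ hecl : e ∈ X).2 rfl
  obtain ⟨C', hC'B, hcard⟩ := hTB.2 X hXE hne
  have hC' : Circuit M C' := hTB.1 C' hC'B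
  obtain ⟨f, hf⟩ := ncard_eq_one.1 hcard
  have hfC' : f ∈ C' := (hf ▸ (rfl : f ∈ ({f} : Set α)) : f ∈ C' \ X).1
  have hsub : C' \ {f} ⊆ X := by
    intro x hx
    by_contra hxX
    have : x ∈ C' \ X := ⟨hx.1, hxX⟩
    exact hx.2 (hf ▸ this)
  have hfcl : f ∈ M.closure X :=
    M.closure_subset_closure_of_subset_closure
      (hsub.trans (M.subset_closure X hXE)) (hC'.mem_closure_diff_singleton hfC')
  have hfC : f ∈ C := hcl ▸ (M.closure_subset_closure diff_subset hfcl)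
  have hC'C : C' ⊆ C := by
    intro x hx
    by_cases hxf : x = f
    · exact hxf ▸ hfC
    · exact (hsub ⟨hx, hxf⟩).1
  exact (hC.eq_of_subset hC' hC'C) ▸ hC'B

/-- The set of closed circuits is a tropical basis (simple binary case). -/
lemma closedCircuits_tropicalBasis [M.Finite] (hM : Simple M) (hB : Binary M) :
    TropicalBasis M {C | Circuit M C ∧ M.closure C = C} := by
  refine ⟨fun C hC => hC.1, fun X hXE hne => ?_⟩
  -- find some circuit with |C \ X| = 1
  have hXcl : X ⊆ M.closure X := M.subset_closure X hXE
  have hss : X ⊂ M.closure X := ssubset_of_subset_not_subset hXcl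
    (fun h => hne (h.antisymm hXcl))
  obtain ⟨e₀, he₀cl, he₀X⟩ := exists_of_ssubset hss
  obtain ⟨C₀, hC₀, he₀C₀, hC₀sub⟩ := exists_circuit_of_mem_closure hXE he₀cl he₀X
  have hC₀card : (C₀ \ X).ncard = 1 := by
    have : C₀ \ X = {e₀} := by
      apply subset_antisymm
      · intro x hx
        exact ((hC₀sub hx.1).resolve_right hx.2 : x = e₀)
      · exact singleton_subset_iff.2 ⟨he₀C₀, he₀X⟩
    rw [this, ncard_singleton]
  -- choose a circuit of minimum cardinality among those with |C \ X| = 1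
  set S : Set ℕ := {n | ∃ C, Circuit M C ∧ (C \ X).ncard = 1 ∧ C.ncard = n} with hS
  have hSne : S.Nonempty := ⟨C₀.ncard, C₀, hC₀, hC₀card, rfl⟩
  obtain ⟨C, hC, hC1, hCn⟩ := Nat.sInf_mem hSne
  have hmin : ∀ C', Circuit M C' → (C' \ X).ncard = 1 → C.ncard ≤ C'.ncard := by
    intro C' h1 h2
    rw [hCn]
    exact Nat.sInf_le ⟨C', h1, h2, rfl⟩
  have hCfin : C.Finite := hC.finite
  obtain ⟨e, hCe⟩ := ncard_eq_one.1 hC1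
  have heC : e ∈ C := (hCe ▸ (rfl : e ∈ ({e} : Set α)) : e ∈ C \ X).1
  have heX : e ∉ X := (hCe ▸ (rfl : e ∈ ({e} : Set α)) : e ∈ C \ X).2
  have hCsubX : ∀ x ∈ C, x ∉ X → x = e := by
    intro x hx hxX
    exact (hCe ▸ (⟨hx, hxX⟩ : x ∈ C \ X) : x ∈ ({e} : Set α))
  -- the chosen circuit is closed
  refine ⟨C, ⟨hC, ?_⟩, hC1⟩
  refine subset_antisymm ?_ (M.subset_closure C hC.subset_ground)
  intro f hf
  by_contra hfC
  have hCE : C ⊆ M.E := hC.subset_ground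
  by_cases hfX : f ∈ X
  · -- Case f ∈ X
    have hf' : f ∈ M.closure (C \ {e}) := by
      rwa [hC.closure_diff_singleton heC]
    have hfCe : f ∉ C \ {e} := fun h => hfC h.1
    obtain ⟨C₁, h₁, hf₁, h₁sub⟩ :=
      exists_circuit_of_mem_closure (diff_subset.trans hCE) hf' hfCe
    have hef : e ≠ f := fun h => heX (h ▸ hfX)
    have he₁ : e ∉ C₁ := by
      intro h
      rcases h₁sub h with h' | h'
      · exact hef h'
      · exact h'.2 rfl
    have h₁card : 3 ≤ C₁.ncard := hM C₁ h₁
    obtain ⟨g, hg₁, hgf⟩ := exists_ne_of_one_lt_ncard (show 1 < C₁.ncard by omega) f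
    have hgC : g ∈ C := by
      rcases h₁sub hg₁ with h' | h'
      · exact absurd h' hgf
      · exact h'.1
    -- strong elimination: circuits C, C₁ with g ∈ C ∩ C₁, e ∈ C \ C₁
    obtain ⟨C₂, h₂, he₂, h₂sub⟩ := strong_elimination hC h₁ hgC hg₁ heC he₁
    have h₂sub' : C₂ ⊆ (insert f C) \ {g} := by
      refine h₂sub.trans (diff_subset_diff_left ?_)
      refine union_subset (subset_insert f C) (h₁sub.trans ?_)
      exact insert_subset_insert diff_subset
    have h₂X : (C₂ \ X).ncard = 1 := by
      have : C₂ \ X = {e} := by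
        apply subset_antisymm
        · intro x hx
          have hx' : x ∈ insert f C := (h₂sub' hx.1).1
          rcases hx' with h' | h'
          · exact absurd (h' ▸ hfX) hx.2
          · exact hCsubX x h' hx.2
        · exact singleton_subset_iff.2 ⟨he₂, heX⟩
      rw [this, ncard_singleton]
    have hminC₂ : C.ncard ≤ C₂.ncard := hmin C₂ h₂ h₂X
    have hcardeq : ((insert f C) \ {g}).ncard = C.ncard := by
      rw [ncard_diff_singleton_of_mem (mem_insert_of_mem f hgC),
        ncard_insert_of_notMem hfC hCfin]
      omega
    have hC₂eq : C₂ = (insert f C) \ {g} :=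
      eq_of_subset_of_ncard_le h₂sub' (by omega) ((hCfin.insert f).diff)
    have hfC₂ : f ∈ C₂ := hC₂eq ▸ ⟨mem_insert f C, fun h => hgf (h : f = g).symm⟩
    have hCC₂ : C ≠ C₂ := fun h => hfC (h ▸ hfC₂)
    obtain ⟨C₃, h₃sub, h₃⟩ := hB C C₂ hC h₂ hCC₂
    have h₃pair : C₃ ⊆ {g, f} := by
      intro x hx
      rcases h₃sub hx with h' | h'
      · -- x ∈ C \ C₂ : then x = g
        have : x ∉ (insert f C) \ {g} := hC₂eq ▸ h'.2
        simp only [mem_diff, mem_insert_iff, mem_singleton_iff, not_and, not_not] at this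
        exact Or.inl (this (Or.inr h'.1))
      · -- x ∈ C₂ \ C : then x = f
        have : x ∈ insert f C := (hC₂eq ▸ h'.1 : x ∈ (insert f C) \ {g}).1
        exact Or.inr (this.resolve_right h'.2)
    have : C₃.ncard ≤ 2 := by
      calc C₃.ncard ≤ ({g, f} : Set α).ncard :=
            ncard_le_ncard h₃pair (toFinite _)
        _ ≤ 2 := (ncard_insert_le g {f}).trans (by rw [ncard_singleton])
    have := hM C₃ h₃
    omega
  · -- Case f ∉ X
    have hfE : f ∈ M.E := M.mem_ground_of_mem_closure hf
    obtain ⟨C₁, h₁, hf₁, h₁sub⟩ := exists_circuit_of_mem_closure hCE hf hfC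
    have hC₁fin : C₁.Finite := h₁.finite
    have h₁card : 3 ≤ C₁.ncard := hM C₁ h₁
    have hC₁f_sub : C₁ \ {f} ⊆ C := by
      intro x hx
      exact (h₁sub hx.1).resolve_left hx.2
    have hCC₁ : C ≠ C₁ := fun h => hfC (h ▸ hf₁)
    have hC₁diff : C₁ \ C ⊆ {f} := fun x hx =>
      ((h₁sub hx.1).resolve_right hx.2 : x = f)
    have hinter : C ∩ C₁ = C₁ \ {f} := by
      apply subset_antisymm
      · intro x hx
        exact ⟨hx.2, fun h => hfC ((h : x = f) ▸ hx.1)⟩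
      · intro x hx
        exact ⟨hC₁f_sub hx, hx.1⟩
    have hinter_card : (C ∩ C₁).ncard = C₁.ncard - 1 := by
      rw [hinter, ncard_diff_singleton_of_mem hf₁]
    have hCdiff_card : (C \ C₁).ncard = C.ncard - (C₁.ncard - 1) := by
      have : C \ C₁ = C \ (C ∩ C₁) := by
        ext x; simp only [mem_diff, mem_inter_iff]; tauto
      rw [this, ncard_diff inter_subset_left (hCfin.subset inter_subset_left), hinter_card]
    have hinter_le : C₁.ncard - 1 ≤ C.ncard := by
      have := ncard_le_ncard (hinter ▸ inter_subset_left : C₁ \ {f} ⊆ C) hCfin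
      rw [ncard_diff_singleton_of_mem hf₁] at this
      exact this
    by_cases he₁ : e ∈ C₁
    · -- e ∈ C₁ : binary elimination gives a smaller circuit, contradiction
      obtain ⟨C₂, h₂sub, h₂⟩ := hB C C₁ hC h₁ hCC₁
      have hf₂ : f ∈ C₂ := by
        by_contra hf₂
        have hsub : C₂ ⊆ C \ C₁ := by
          intro x hx
          rcases h₂sub hx with h' | h'
          · exact h'
          · exact absurd ((hC₁diff h' : x = f) ▸ hx) hf₂
        have : C ⊆ C₂ := hC.subset_of_dep_subset h₂.1 (hsub.trans diff_subset)
        exact (hsub (this heC)).2 he₁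
      have h₂X : (C₂ \ X).ncard = 1 := by
        have : C₂ \ X = {f} := by
          apply subset_antisymm
          · intro x hx
            rcases h₂sub hx.1 with h' | h'
            · have : x = e := hCsubX x h'.1 hx.2
              exact absurd (this ▸ h'.2) (fun hcon => hcon he₁)
            · exact hC₁diff h'
          · exact singleton_subset_iff.2 ⟨hf₂, hfX⟩
        rw [this, ncard_singleton]
      have hminC₂ : C.ncard ≤ C₂.ncard := hmin C₂ h₂ h₂X
      have h₂bound : C₂.ncard ≤ (C \ C₁).ncard + 1 := by
        have hsub : C₂ ⊆ (C \ C₁) ∪ {f} :=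
          h₂sub.trans (union_subset_union_right _ hC₁diff)
        calc C₂.ncard ≤ ((C \ C₁) ∪ {f}).ncard :=
              ncard_le_ncard hsub ((hCfin.subset diff_subset).union (finite_singleton f))
          _ ≤ (C \ C₁).ncard + ({f} : Set α).ncard := ncard_union_le _ _
          _ = (C \ C₁).ncard + 1 := by rw [ncard_singleton]
      rw [hCdiff_card] at h₂bound
      omega
    · -- e ∉ C₁ : C₁ has |C₁ \ X| = 1, minimality forces |C △ C₁| ≤ 2
      have h₁X : (C₁ \ X).ncard = 1 := by
        have : C₁ \ X = {f} := by
          apply subset_antisymm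
          · intro x hx
            rcases h₁sub hx.1 with h' | h'
            · exact h'
            · exact absurd ((hCsubX x h' hx.2) ▸ hx.1) he₁
          · exact singleton_subset_iff.2 ⟨hf₁, hfX⟩
        rw [this, ncard_singleton]
      have hminC₁ : C.ncard ≤ C₁.ncard := hmin C₁ h₁ h₁X
      obtain ⟨C₃, h₃sub, h₃⟩ := hB C C₁ hC h₁ hCC₁
      have h₃bound : C₃.ncard ≤ (C \ C₁).ncard + 1 := by
        have hsub : C₃ ⊆ (C \ C₁) ∪ {f} :=
          h₃sub.trans (union_subset_union_right _ hC₁diff)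
        calc C₃.ncard ≤ ((C \ C₁) ∪ {f}).ncard :=
              ncard_le_ncard hsub ((hCfin.subset diff_subset).union (finite_singleton f))
          _ ≤ (C \ C₁).ncard + ({f} : Set α).ncard := ncard_union_le _ _
          _ = (C \ C₁).ncard + 1 := by rw [ncard_singleton]
      rw [hCdiff_card] at h₃bound
      have := hM C₃ h₃
      omega

end Aux

theorem stmt10 (M : Matroid α) [M.Finite] (hM : Simple M) (hB : Binary M) :
    ∀ B, MinimalTropicalBasis M B ↔ B = {C | Circuit M C ∧ M.closure C = C} := by
  intro B
  set K : Set (Set α) := {C | Circuit M C ∧ M.closure C = C} with hK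
  have hKTB : TropicalBasis M K := closedCircuits_tropicalBasis hM hB
  constructor
  · rintro ⟨hTB, hmin⟩
    apply subset_antisymm
    · -- B ⊆ K
      intro C hCB
      by_contra hCK
      apply hmin C hCB
      refine ⟨fun C' hC' => hTB.1 C' hC'.1, fun X hXE hne => ?_⟩
      obtain ⟨C', hC'K, hcard⟩ := hKTB.2 X hXE hne
      refine ⟨C', ⟨closed_circuit_mem_tropicalBasis hTB hC'K.1 hC'K.2, ?_⟩, hcard⟩
      exact fun h => hCK ((h : C' = C) ▸ hC'K)
    · -- K ⊆ B
      intro C hCK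
      exact closed_circuit_mem_tropicalBasis hTB hCK.1 hCK.2
  · rintro rfl
    refine ⟨hKTB, fun C hCK hTB' => ?_⟩
    have : C ∈ K \ {C} := closed_circuit_mem_tropicalBasis hTB' hCK.1 hCK.2
    exact this.2 rfl

end TropicalPaper
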